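/- arXiv:1504.00694 — 4 statements merged into one kernel-verified Lean document; each statement's English description precedes it below -/
import Mathlib

section
/- Let p be a prime and N_0 ≤ 7 a positive integer, and let r > 0. Set u = max(ln(N_0)/(N_0 r ln p), 2/(N_0 r ln p)). Then N_p(r, N_0) ≤ ⌈N_0 · exp(u)⌉, where N_p(r, N_0) is the smallest positive integer N such that r(n - N_0) > ⌊log_p(n)⌋ for all n ≥ N. -/
/-- `Np p r N₀` is the smallest positive integer `N` such that
`r * (n - N₀) > ⌊log_p n⌋` for all integers `n ≥ N`. -/
noncomputable def Np (p : ℕ) (r : ℝ) (N₀ : ℤ) : ℕ :=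
  sInf {N : ℕ | 0 < N ∧ ∀ n : ℕ, N ≤ n →
    (⌊Real.logb p n⌋ : ℝ) < r * ((n : ℝ) - (N₀ : ℝ))}

lemma cubic_lt_exp {x : ℝ} (hx : 0 < x) : 1 + x + x ^ 2 / 2 < Real.exp x := by
  have h := Real.sum_le_exp_of_nonneg hx.le 4
  have : (∑ i ∈ Finset.range 4, x ^ i / (Nat.factorial i)) = 1 + x + x ^ 2 / 2 + x ^ 3 / 6 := by
    simp [Finset.sum_range_succ, Nat.factorial]
  nlinarith [pow_pos hx 3]

/-- Let `p` be a prime, `N₀` a positive integer with `N₀ ≤ 7`, and `r > 0`.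
With `u = max(ln N₀ / (N₀ r ln p), 2 / (N₀ r ln p))`, one has
`N_p(r, N₀) ≤ ⌈N₀ · exp u⌉`. -/
theorem Np_le_ceil_exp (p : ℕ) (hp : p.Prime) (N₀ : ℕ) (hN₀ : 1 ≤ N₀) (hN₀7 : N₀ ≤ 7)
    (r : ℝ) (hr : 0 < r) (u : ℝ)
    (hu : u = max (Real.log N₀ / ((N₀ : ℝ) * r * Real.log p))
                  (2 / ((N₀ : ℝ) * r * Real.log p))) :
    (Np p r (N₀ : ℤ) : ℤ) ≤ ⌈(N₀ : ℝ) * Real.exp u⌉ := by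
  have hp2 : (2 : ℝ) ≤ p := by exact_mod_cast hp.two_le
  have hlogp : 0 < Real.log p := Real.log_pos (by linarith)
  have hN₀R : (0 : ℝ) < N₀ := by exact_mod_cast hN₀
  have hc : (0 : ℝ) < (N₀ : ℝ) * r * Real.log p := by positivity
  set c : ℝ := (N₀ : ℝ) * r * Real.log p with hcdef
  have hu2 : 2 / c ≤ u := hu ▸ le_max_right _ _
  have hu1 : Real.log N₀ / c ≤ u := hu ▸ le_max_left _ _
  have hupos : 0 < u := lt_of_lt_of_le (by positivity) hu2
  have hMpos : (0 : ℝ) < (N₀ : ℝ) * Real.exp u := by positivity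
  have hM1 : (1 : ℤ) ≤ ⌈(N₀ : ℝ) * Real.exp u⌉ := by
    exact_mod_cast Int.ceil_pos.mpr hMpos
  set M : ℕ := (⌈(N₀ : ℝ) * Real.exp u⌉).toNat with hMdef
  have hMcast : (M : ℤ) = ⌈(N₀ : ℝ) * Real.exp u⌉ := Int.toNat_of_nonneg (by linarith)
  have hmem : M ∈ {N : ℕ | 0 < N ∧ ∀ n : ℕ, N ≤ n →
      (⌊Real.logb p n⌋ : ℝ) < r * ((n : ℝ) - (N₀ : ℝ))} := by
    constructor
    · have : (0 : ℤ) < (M : ℤ) := by rw [hMcast]; linarith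
      exact_mod_cast this
    · intro n hn
      have hnM : ((M : ℤ) : ℝ) ≤ (n : ℝ) := by exact_mod_cast hn
      have hnR : (N₀ : ℝ) * Real.exp u ≤ (n : ℝ) := by
        calc (N₀ : ℝ) * Real.exp u ≤ ((⌈(N₀ : ℝ) * Real.exp u⌉ : ℤ) : ℝ) := Int.le_ceil _
          _ = ((M : ℤ) : ℝ) := by rw [hMcast]
          _ ≤ (n : ℝ) := hnM
      have hnpos : (0 : ℝ) < (n : ℝ) := lt_of_lt_of_le hMpos hnR
      set v : ℝ := Real.log n - Real.log N₀ with hvdef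
      have hev : Real.exp v = (n : ℝ) / N₀ := by
        rw [hvdef, Real.exp_sub, Real.exp_log hnpos, Real.exp_log hN₀R]
      have hnv : (n : ℝ) = N₀ * Real.exp v := by
        rw [hev]; field_simp
      have huv : u ≤ v := by
        have h1 : Real.exp u ≤ Real.exp v := by
          rw [hev]
          rw [le_div_iff₀ hN₀R]
          linarith [mul_comm (Real.exp u) (N₀ : ℝ)]
        exact (Real.exp_le_exp).mp h1
      have hvpos : 0 < v := lt_of_lt_of_le hupos huv
      -- key inequality
      have hkey : Real.log n < r * ((n : ℝ) - N₀) * Real.log p := by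
        have h1 : 1 + v + v ^ 2 / 2 < Real.exp v := cubic_lt_exp hvpos
        have hv2c : 2 / c ≤ v := le_trans hu2 huv
        have hvlog : Real.log N₀ / c ≤ v := le_trans hu1 huv
        have hA : Real.log N₀ ≤ c * v := by
          rw [div_le_iff₀ hc] at hvlog; linarith [mul_comm v c]
        have hB : v ≤ c * (v ^ 2 / 2) := by
          rw [div_le_iff₀ hc] at hv2c
          nlinarith
        have hlogn : Real.log n = Real.log N₀ + v := by rw [hvdef]; ring
        have hmain : Real.log N₀ + v < c * (Real.exp v - 1) := by
          nlinarith
        calc Real.log n = Real.log N₀ + v := hlogn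
          _ < c * (Real.exp v - 1) := hmain
          _ = r * ((N₀ : ℝ) * Real.exp v - N₀) * Real.log p := by rw [hcdef]; ring
          _ = r * ((n : ℝ) - N₀) * Real.log p := by rw [← hnv]
      have : Real.logb p n < r * ((n : ℝ) - N₀) := by
        rw [Real.logb, div_lt_iff₀ hlogp]
        exact hkey
      calc (⌊Real.logb p n⌋ : ℝ) ≤ Real.logb p n := Int.floor_le _
        _ < r * ((n : ℝ) - N₀) := this
  have hNp : Np p r (N₀ : ℤ) ≤ M := Nat.sInf_le hmem
  calc (Np p r (N₀ : ℤ) : ℤ) ≤ (M : ℤ) := by exact_mod_cast hNp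
    _ = ⌈(N₀ : ℝ) * Real.exp u⌉ := hMcast
end

section
/- Let (Γ, g) be a vertex-weighted metric graph of genus g(Γ), and let F be a tropical meromorphic function on Γ (a continuous piecewise affine-linear function with integer slopes) such that div(F) + K_Γ ≥ 0. Then for all points x ∈ Γ and all tangent directions v at x, the slope satisfies |d_v F(x)| ≤ 2g(Γ) − 1. If moreover K_Γ is effective (Γ has no genus-zero leaves), then |d_v F(x)| ≤ 2g(Γ) − 2. -/
/-!
Take an edge `e₀` with nonzero slope and let `A` be the set of vertices where `F` is strictly
smaller than at the upper endpoint of `e₀`. Summing `div(F) + K_Γ ≥ 0` over `A`, every edge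
leaving `A` has an outgoing slope of absolute value at least `1` and contributes `1` to the
degree of `K_Γ` on `A`, so `|s e₀| ≤ 2 g(A) - 1`, where `g(A)` is the genus of the subgraph
induced on `A`. Connectivity of `Γ` gives `g(A) ≤ g(Γ)`, since every vertex outside `A` can be
charged to its own edge. If `K_Γ ≥ 0`, summing `K_Γ` over the complement of `A` instead gives
`2 g(A) + #∂A ≤ 2 g(Γ)`, which gains the extra unit.
-/

open Finset

/-- The valency (degree) of a vertex in a finite multigraph whose edges are recorded as
ordered pairs of endpoints; a loop edge counts twice. -/
def valency {V E : Type*} [Fintype E] [DecidableEq V] (ends : E → V × V) (v : V) : ℕ :=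
  ∑ e : E, ((if (ends e).1 = v then 1 else 0) + (if (ends e).2 = v then 1 else 0))

/-- Adjacency relation determined by the edge set. -/
def Adj {V E : Type*} (ends : E → V × V) (x y : V) : Prop :=
  ∃ e : E, ends e = (x, y) ∨ ends e = (y, x)

/-- Connectivity of a finite multigraph. -/
def GraphConnected {V E : Type*} (ends : E → V × V) : Prop :=
  Nonempty V ∧ ∀ x y : V, Relation.ReflTransGen (Adj ends) x y

/-- The genus of a connected vertex-weighted graph: `h₁(Γ) + Σ_x g(x)` where
`h₁(Γ) = #E - #V + 1`. -/
def graphGenus (V E : Type*) [Fintype V] [Fintype E] (w : V → ℕ) : ℤ :=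
  (Fintype.card E : ℤ) - (Fintype.card V : ℤ) + 1 + ∑ v : V, (w v : ℤ)


/-- The order `ord_v(F)` of a tropical meromorphic function at a vertex `v`: the sum of
the incoming slopes of `F` at `v`.  Here `s e` is the slope of `F` along the edge `e`
oriented from `(ends e).1` to `(ends e).2`, so the incoming slope at `(ends e).1` is
`-(s e)` and the incoming slope at `(ends e).2` is `s e`. -/
def ordAt {V E : Type*} [Fintype E] [DecidableEq V]
    (ends : E → V × V) (s : E → ℤ) (v : V) : ℤ :=
  ∑ e : E, ((if (ends e).1 = v then -(s e) else 0) + (if (ends e).2 = v then s e else 0))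

section Cuts

variable {V E : Type*} [Fintype E] [DecidableEq V] (ends : E → V × V)

def innerEdges (A : Finset V) : Finset E := {e | (ends e).1 ∈ A ∧ (ends e).2 ∈ A}

def cutEdges (A : Finset V) : Finset E := {e | ¬((ends e).1 ∈ A ↔ (ends e).2 ∈ A)}

def incidentEdges (A : Finset V) : Finset E := {e | (ends e).1 ∈ A ∨ (ends e).2 ∈ A}

/-- `h₁ + Σ g(x)` for the subgraph induced on `A`, when that subgraph is connected. -/
def subgraphGenus (w : V → ℕ) (A : Finset V) : ℤ :=
  #(innerEdges ends A) - #A + 1 + ∑ v ∈ A, (w v : ℤ)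

def canonicalDivisor (w : V → ℕ) (v : V) : ℤ := 2 * w v - 2 + valency ends v

lemma card_innerEdges_add_card_cutEdges (A : Finset V) :
    #(innerEdges ends A) + #(cutEdges ends A) = #(incidentEdges ends A) := by
  simp only [innerEdges, cutEdges, incidentEdges, card_filter, ← sum_add_distrib]
  refine sum_congr rfl fun e _ => ?_
  split_ifs <;> tauto

lemma sum_valency (A : Finset V) :
    ∑ v ∈ A, (valency ends v : ℤ) = 2 * #(innerEdges ends A) + #(cutEdges ends A) := by
  simp only [valency, innerEdges, cutEdges, card_filter]
  push_cast
  rw [sum_comm, mul_sum, ← sum_add_distrib]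
  refine sum_congr rfl fun e _ => ?_
  rw [sum_add_distrib, sum_ite_eq, sum_ite_eq]
  split_ifs <;> tauto

lemma sum_canonicalDivisor (w : V → ℕ) (A : Finset V) :
    ∑ v ∈ A, canonicalDivisor ends w v =
      2 * subgraphGenus ends w A - 2 + #(cutEdges ends A) := by
  simp only [canonicalDivisor, subgraphGenus, sum_add_distrib, sum_sub_distrib, sum_valency,
    ← mul_sum, sum_const, nsmul_eq_mul]
  ring

lemma sum_ordAt (s : E → ℤ) (A : Finset V) :
    ∑ v ∈ A, ordAt ends s v =
      ∑ e, ((if (ends e).2 ∈ A then s e else 0) - if (ends e).1 ∈ A then s e else 0) := by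
  simp only [ordAt]
  rw [sum_comm]
  refine sum_congr rfl fun e _ => ?_
  rw [sum_add_distrib, sum_ite_eq, sum_ite_eq]
  split_ifs <;> ring

lemma nonempty_of_mem_cutEdges {A : Finset V} {e : E} (he : e ∈ cutEdges ends A) :
    A.Nonempty := by
  rw [nonempty_iff_ne_empty]
  rintro rfl
  simp [cutEdges] at he

variable [Fintype V]

lemma cutEdges_compl (A : Finset V) : cutEdges ends Aᶜ = cutEdges ends A := by
  ext e
  simp only [cutEdges, mem_filter, mem_univ, mem_compl, true_and]
  tauto

lemma card_edges_eq_inner_add_inner_compl_add_cut (A : Finset V) :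
    (Fintype.card E : ℤ) =
      #(innerEdges ends A) + #(innerEdges ends Aᶜ) + #(cutEdges ends A) := by
  rw [← card_univ, card_eq_sum_ones]
  simp only [innerEdges, cutEdges, card_filter, mem_compl]
  push_cast
  rw [← sum_add_distrib, ← sum_add_distrib]
  refine sum_congr rfl fun e _ => ?_
  split_ifs <;> tauto

lemma subgraphGenus_univ (w : V → ℕ) : subgraphGenus ends w univ = graphGenus V E w := by
  simp [subgraphGenus, graphGenus, innerEdges]

lemma graphGenus_eq_subgraphGenus_add (w : V → ℕ) (A : Finset V) :
    graphGenus V E w =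
      subgraphGenus ends w A + subgraphGenus ends w Aᶜ + #(cutEdges ends A) - 1 := by
  have hV : (Fintype.card V : ℤ) = #A + #Aᶜ := by exact_mod_cast (card_add_card_compl A).symm
  rw [graphGenus, subgraphGenus, subgraphGenus,
    card_edges_eq_inner_add_inner_compl_add_cut ends A, hV, ← sum_add_sum_compl A]
  ring

lemma two_mul_subgraphGenus_add_card_cutEdges_le (w : V → ℕ) {A : Finset V}
    (hK : ∀ v ∉ A, 0 ≤ canonicalDivisor ends w v) :
    2 * subgraphGenus ends w A + #(cutEdges ends A) ≤ 2 * graphGenus V E w := by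
  have h := sum_nonneg fun v (hv : v ∈ Aᶜ) => hK v (mem_compl.1 hv)
  rw [sum_canonicalDivisor, cutEdges_compl] at h
  rw [graphGenus_eq_subgraphGenus_add ends w A]
  omega

lemma sum_ordAt_univ (s : E → ℤ) : ∑ v, ordAt ends s v = 0 := by
  simp [sum_ordAt]

lemma one_le_graphGenus (w : V → ℕ) (s : E → ℤ)
    (hcanon : ∀ v, 0 ≤ ordAt ends s v + canonicalDivisor ends w v) :
    1 ≤ graphGenus V E w := by
  have h := sum_nonneg fun v (_ : v ∈ univ) => hcanon v
  rw [sum_add_distrib, sum_ordAt_univ, sum_canonicalDivisor, subgraphGenus_univ] at h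
  simp [cutEdges] at h
  omega

end Cuts

lemma exists_adj_mem_notMem_of_reflTransGen {V E : Type*} {ends : E → V × V} {S : Finset V}
    {a b : V}
    (hab : Relation.ReflTransGen (Adj ends) a b) (ha : a ∈ S) (hb : b ∉ S) :
    ∃ x ∈ S, ∃ y ∉ S, Adj ends x y := by
  induction hab with
  | refl => exact absurd ha hb
  | @tail c d _ hcd ih =>
    by_cases hc : c ∈ S
    · exact ⟨c, hc, d, hb, hcd⟩
    · exact ih hc

section Connectivity

variable {V E : Type*} [Fintype E] [DecidableEq V] {ends : E → V × V}

/-- Peel off a vertex `x ∈ S` adjacent to some `y ∉ S`: the edge `xy` is incident to `S` but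
not to `S.erase x`. -/
lemma card_le_card_incidentEdges (hconn : GraphConnected ends) {v₀ : V} :
    ∀ S : Finset V, v₀ ∉ S → #S ≤ #(incidentEdges ends S) := by
  intro S
  induction S using Finset.strongInduction with
  | H S ih =>
    intro hv₀
    rcases S.eq_empty_or_nonempty with rfl | ⟨a, ha⟩
    · simp
    obtain ⟨x, hx, y, hy, e, he⟩ :=
      exists_adj_mem_notMem_of_reflTransGen (hconn.2 a v₀) ha hv₀
    have hle := ih (S.erase x) (erase_ssubset hx) fun h => hv₀ (mem_of_mem_erase h)
    have hy' : y ∉ S.erase x := fun h => hy (mem_of_mem_erase h)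
    have hsub : incidentEdges ends (S.erase x) ⊂ incidentEdges ends S := by
      refine (ssubset_iff_of_subset fun e he => ?_).2 ⟨e, ?_, ?_⟩
      · simp only [incidentEdges, mem_filter, mem_univ, true_and] at he ⊢
        exact he.imp mem_of_mem_erase mem_of_mem_erase
      · rcases he with he | he <;> simp [incidentEdges, he, hx]
      · rcases he with he | he <;> simp only [incidentEdges, mem_filter, mem_univ, true_and, he,
          notMem_erase, hy', or_self, not_false_eq_true]
    rw [← card_erase_add_one hx]
    exact (Nat.add_le_add_right hle 1).trans (card_lt_card hsub)

variable [Fintype V]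

lemma subgraphGenus_le_graphGenus (hconn : GraphConnected ends) (w : V → ℕ) {A : Finset V}
    (hA : A.Nonempty) : subgraphGenus ends w A ≤ graphGenus V E w := by
  obtain ⟨v₀, hv₀⟩ := hA
  have hcard := card_le_card_incidentEdges hconn Aᶜ (notMem_compl.2 hv₀)
  have hw : 0 ≤ ∑ v ∈ Aᶜ, (w v : ℤ) := sum_nonneg fun v _ => by positivity
  rw [← card_innerEdges_add_card_cutEdges, cutEdges_compl] at hcard
  rw [graphGenus_eq_subgraphGenus_add ends w A]
  simp only [subgraphGenus]
  omega

end Connectivity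

lemma pos_iff_lt_of_sub_eq_mul {a b l : ℝ} {k : ℤ} (h : b - a = k * l) (hl : 0 < l) :
    0 < k ↔ a < b := by
  rw [← sub_pos (a := b), h, mul_pos_iff_of_pos_right hl, Int.cast_pos]

lemma neg_iff_lt_of_sub_eq_mul {a b l : ℝ} {k : ℤ} (h : b - a = k * l) (hl : 0 < l) :
    k < 0 ↔ b < a := by
  rw [← neg_pos, pos_iff_lt_of_sub_eq_mul (a := b) (b := a) (k := -k) (by push_cast; linarith) hl]

section Sublevel

variable {V E : Type*} [Fintype V] [Fintype E] [DecidableEq V] {ends : E → V × V}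
  {len : E → ℝ} {F : V → ℝ} {s : E → ℤ}

lemma sum_ordAt_sublevel (hlen : ∀ e, 0 < len e)
    (hslope : ∀ e, F (ends e).2 - F (ends e).1 = s e * len e) (c : ℝ) :
    ∑ v ∈ ({v | F v < c} : Finset V), ordAt ends s v =
      -∑ e ∈ cutEdges ends {v | F v < c}, |s e| := by
  rw [sum_ordAt, cutEdges, sum_filter, ← sum_neg_distrib]
  refine sum_congr rfl fun e _ => ?_
  have hpos := pos_iff_lt_of_sub_eq_mul (hslope e) (hlen e)
  have hneg := neg_iff_lt_of_sub_eq_mul (hslope e) (hlen e)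
  simp only [mem_filter, mem_univ, true_and]
  by_cases h1 : F (ends e).1 < c <;> by_cases h2 : F (ends e).2 < c
  · simp [h1, h2]
  · simp [h1, h2, abs_of_pos (hpos.2 (by linarith))]
  · simp [h1, h2, abs_of_neg (hneg.2 (by linarith))]
  · simp [h1, h2]

lemma slope_ne_zero_of_mem_cutEdges
    (hslope : ∀ e, F (ends e).2 - F (ends e).1 = s e * len e) {c : ℝ} {e : E}
    (he : e ∈ cutEdges ends {v | F v < c}) : s e ≠ 0 := by
  intro h0
  have hF : F (ends e).2 = F (ends e).1 := by simpa [h0, sub_eq_zero] using hslope e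
  simp [cutEdges, hF] at he

lemma exists_mem_cutEdges_sublevel (hlen : ∀ e, 0 < len e)
    (hslope : ∀ e, F (ends e).2 - F (ends e).1 = s e * len e) {e : E} (he : s e ≠ 0) :
    ∃ c : ℝ, e ∈ cutEdges ends {v | F v < c} := by
  rcases he.lt_or_gt with hneg | hpos
  · have h := (neg_iff_lt_of_sub_eq_mul (hslope e) (hlen e)).1 hneg
    exact ⟨F (ends e).1, by simp [cutEdges, h]⟩
  · have h := (pos_iff_lt_of_sub_eq_mul (hslope e) (hlen e)).1 hpos
    exact ⟨F (ends e).2, by simp [cutEdges, h]⟩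

lemma abs_slope_le_of_mem_cutEdges (w : V → ℕ) (hlen : ∀ e, 0 < len e)
    (hslope : ∀ e, F (ends e).2 - F (ends e).1 = s e * len e)
    (hcanon : ∀ v, 0 ≤ ordAt ends s v + canonicalDivisor ends w v) {c : ℝ} {e₀ : E}
    (he₀ : e₀ ∈ cutEdges ends {v | F v < c}) :
    |s e₀| ≤ 2 * subgraphGenus ends w {v | F v < c} - 1 := by
  have hsum := sum_nonneg fun v (_ : v ∈ ({v | F v < c} : Finset V)) => hcanon v
  rw [sum_add_distrib, sum_ordAt_sublevel hlen hslope, sum_canonicalDivisor] at hsum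
  have hexcess := single_le_sum (f := fun e => |s e| - 1)
    (fun e he => sub_nonneg.2 (Int.one_le_abs (slope_ne_zero_of_mem_cutEdges hslope he))) he₀
  rw [sum_sub_distrib, sum_const, nsmul_one] at hexcess
  omega

end Sublevel

theorem slope_bound_general {V E : Type*} [Fintype V] [Fintype E] [DecidableEq V]
    (ends : E → V × V)
    (w : V → ℕ) (len : E → ℝ) (hlen : ∀ e, 0 < len e)
    (hconn : GraphConnected ends)
    (F : V → ℝ) (s : E → ℤ)
    (hslope : ∀ e : E, F (ends e).2 - F (ends e).1 = (s e : ℝ) * len e)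
    (hcanon : ∀ v : V,
      0 ≤ ordAt ends s v + (2 * (w v : ℤ) - 2 + (valency ends v : ℤ))) :
    (∀ e : E, |s e| ≤ 2 * graphGenus V E w - 1) ∧
    ((∀ v : V, 0 ≤ 2 * (w v : ℤ) - 2 + (valency ends v : ℤ)) →
      ∀ e : E, |s e| ≤ 2 * graphGenus V E w - 2) := by
  have hg : 1 ≤ graphGenus V E w := one_le_graphGenus ends w s hcanon
  have hcut (e : E) (he : s e ≠ 0) : ∃ A : Finset V,
      e ∈ cutEdges ends A ∧ |s e| ≤ 2 * subgraphGenus ends w A - 1 :=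
    let ⟨_, hc⟩ := exists_mem_cutEdges_sublevel hlen hslope he
    ⟨_, hc, abs_slope_le_of_mem_cutEdges w hlen hslope hcanon hc⟩
  refine ⟨fun e => ?_, fun hK e => ?_⟩
  · rcases eq_or_ne (s e) 0 with h0 | h0
    · rw [h0, abs_zero]; omega
    obtain ⟨A, heA, hA⟩ := hcut e h0
    have := subgraphGenus_le_graphGenus hconn w (nonempty_of_mem_cutEdges ends heA)
    omega
  · rcases eq_or_ne (s e) 0 with h0 | h0
    · rw [h0, abs_zero]; omega
    obtain ⟨A, heA, hA⟩ := hcut e h0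
    have := two_mul_subgraphGenus_add_card_cutEdges_le ends w (A := A) fun v _ => hK v
    have := card_pos.2 ⟨e, heA⟩
    omega

/-- Let `(Γ, g)` be a vertex-weighted metric graph of genus `g(Γ)` (modelled,
after subdivision, by a connected loopless multigraph with positive edge lengths, on whose
edges the tropical meromorphic function `F` is affine with integer slopes `s e`).  If
`div(F) + K_Γ ≥ 0`, i.e. `ord_v(F) + (2 g(v) - 2 + deg v) ≥ 0` at every vertex (this is
automatic, with value `0`, at interior points of edges), then every slope of `F` satisfies
`|d_v F(x)| ≤ 2 g(Γ) − 1`; and if moreover `K_Γ` is effective then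
`|d_v F(x)| ≤ 2 g(Γ) − 2`. -/
theorem slope_bound {V E : Type*} [Fintype V] [Fintype E] [DecidableEq V]
    (ends : E → V × V) (hloopfree : ∀ e : E, (ends e).1 ≠ (ends e).2)
    (w : V → ℕ) (len : E → ℝ) (hlen : ∀ e, 0 < len e)
    (hconn : GraphConnected ends)
    (F : V → ℝ) (s : E → ℤ)
    (hslope : ∀ e : E, F (ends e).2 - F (ends e).1 = (s e : ℝ) * len e)
    (hcanon : ∀ v : V,
      0 ≤ ordAt ends s v + (2 * (w v : ℤ) - 2 + (valency ends v : ℤ))) :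
    (∀ e : E, |s e| ≤ 2 * graphGenus V E w - 1) ∧
    ((∀ v : V, 0 ≤ 2 * (w v : ℤ) - 2 + (valency ends v : ℤ)) →
      ∀ e : E, |s e| ≤ 2 * graphGenus V E w - 2) :=
  slope_bound_general ends w len hlen hconn F s hslope hcanon
end

section
/- Let g ≥ 2 be an integer. There are only finitely many isomorphism classes of connected vertex-weighted (nonmetric) graphs G of genus g with the property that every vertex of valency 1 or 2 has positive weight, where the genus of G is h₁(G) + Σ_v g(v). -/
open Finset

/-- A finite vertex-weighted multigraph: `nV` vertices, `nE` edges (each recorded as an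
ordered pair of endpoints; the orientation is immaterial), and a nonnegative integer
weight at each vertex. -/
structure WeightedGraph where
  nV : ℕ
  nE : ℕ
  ends : Fin nE → Fin nV × Fin nV
  weight : Fin nV → ℕ

namespace WeightedGraph

/-- Valency of a vertex; a loop edge counts twice. -/
def valency (G : WeightedGraph) (v : Fin G.nV) : ℕ :=
  ∑ e : Fin G.nE,
    ((if (G.ends e).1 = v then 1 else 0) + (if (G.ends e).2 = v then 1 else 0))

/-- Adjacency relation. -/
def Adj (G : WeightedGraph) (x y : Fin G.nV) : Prop :=
  ∃ e : Fin G.nE, G.ends e = (x, y) ∨ G.ends e = (y, x)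

/-- The graph is connected (and nonempty). -/
def Connected (G : WeightedGraph) : Prop :=
  0 < G.nV ∧ ∀ x y : Fin G.nV, Relation.ReflTransGen G.Adj x y

/-- Genus: `h₁(G) + Σ_v g(v)` with `h₁(G) = E − V + 1` for a connected graph. -/
def genus (G : WeightedGraph) : ℤ :=
  (G.nE : ℤ) - (G.nV : ℤ) + 1 + ∑ v : Fin G.nV, (G.weight v : ℤ)

/-- Isomorphism of vertex-weighted multigraphs: bijections of vertices and edges
preserving endpoints (up to orientation of each edge) and weights. -/
structure Iso (G H : WeightedGraph) where
  eV : Fin G.nV ≃ Fin H.nV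
  eE : Fin G.nE ≃ Fin H.nE
  hends : ∀ e : Fin G.nE,
    H.ends (eE e) = (eV (G.ends e).1, eV (G.ends e).2) ∨
    H.ends (eE e) = (eV (G.ends e).2, eV (G.ends e).1)
  hweight : ∀ v : Fin G.nV, H.weight (eV v) = G.weight v

end WeightedGraph

lemma WG_sum_valency (G : WeightedGraph) :
    ∑ v : Fin G.nV, G.valency v = 2 * G.nE := by
  unfold WeightedGraph.valency
  rw [Finset.sum_comm]
  have : ∀ e : Fin G.nE,
      (∑ v : Fin G.nV,
        ((if (G.ends e).1 = v then 1 else 0) + (if (G.ends e).2 = v then 1 else 0))) = 2 := by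
    intro e
    rw [Finset.sum_add_distrib, Finset.sum_ite_eq, Finset.sum_ite_eq]
    simp
  rw [Finset.sum_congr rfl fun e _ => this e]
  simp [mul_comm]

lemma WG_valency_pos (G : WeightedGraph) (hc : G.Connected) (h2 : 2 ≤ G.nV)
    (v : Fin G.nV) : 1 ≤ G.valency v := by
  -- there is another vertex
  obtain ⟨w, hw⟩ : ∃ w : Fin G.nV, w ≠ v := by
    have : Nontrivial (Fin G.nV) := Fin.nontrivial_iff_two_le.mpr h2
    exact exists_ne v
  have hpath := hc.2 v w
  rcases Relation.ReflTransGen.cases_head hpath with h | ⟨u, hadj, _⟩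
  · exact absurd h.symm hw
  · obtain ⟨e, he⟩ := hadj
    unfold WeightedGraph.valency
    have hterm : 1 ≤ (if (G.ends e).1 = v then 1 else 0) + (if (G.ends e).2 = v then 1 else 0) := by
      rcases he with he | he <;> rw [he] <;> simp
    calc 1 ≤ (if (G.ends e).1 = v then 1 else 0) + (if (G.ends e).2 = v then 1 else 0) := hterm
    _ ≤ _ := Finset.single_le_sum (f := fun e =>
        (if (G.ends e).1 = v then 1 else 0) + (if (G.ends e).2 = v then 1 else 0))
        (fun _ _ => Nat.zero_le _) (Finset.mem_univ e)

lemma WG_bounds (g : ℕ) (hg : 2 ≤ g) (G : WeightedGraph)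
    (hc : G.Connected)
    (hval : ∀ v : Fin G.nV, 1 ≤ G.valency v → G.valency v ≤ 2 → 0 < G.weight v)
    (hgen : G.genus = (g : ℤ)) :
    G.nV ≤ 2 * g ∧ G.nE ≤ 3 * g ∧ ∀ v : Fin G.nV, G.weight v ≤ 3 * g := by
  set S : ℕ := ∑ v : Fin G.nV, G.weight v with hS
  have hcast : (∑ v : Fin G.nV, (G.weight v : ℤ)) = (S : ℤ) := by
    rw [hS]; push_cast; rfl
  have key : G.nE + 1 + S = g + G.nV := by
    unfold WeightedGraph.genus at hgen
    rw [hcast] at hgen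
    omega
  have hwle : ∀ v : Fin G.nV, G.weight v ≤ S := fun v =>
    Finset.single_le_sum (f := fun v => G.weight v) (fun _ _ => Nat.zero_le _)
      (Finset.mem_univ v)
  rcases Nat.lt_or_ge G.nV 2 with h1 | h2
  · -- nV ≤ 1
    refine ⟨by omega, by omega, fun v => ?_⟩
    have := hwle v; omega
  · -- nV ≥ 2
    have hval1 : ∀ v : Fin G.nV, 1 ≤ G.valency v := WG_valency_pos G hc h2
    have hval3 : ∀ v : Fin G.nV, G.weight v = 0 → 3 ≤ G.valency v := by
      intro v hv
      by_contra h
      have := hval v (hval1 v) (by omega)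
      omega
    set Z : Finset (Fin G.nV) := Finset.univ.filter (fun v => G.weight v = 0) with hZ
    set P : Finset (Fin G.nV) := Finset.univ.filter (fun v => ¬ G.weight v = 0) with hP
    have hZP : Z.card + P.card = G.nV := by
      rw [hZ, hP, Finset.card_filter_add_card_filter_not]
      simp
    have hPS : P.card ≤ S := by
      calc P.card = ∑ _v ∈ P, 1 := by rw [Finset.card_eq_sum_ones]
      _ ≤ ∑ v ∈ P, G.weight v := by
          refine Finset.sum_le_sum fun v hv => ?_
          rw [hP, Finset.mem_filter] at hv
          omega
      _ ≤ S := Finset.sum_le_sum_of_subset (Finset.subset_univ P)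
    have hdeg : 3 * Z.card + P.card ≤ 2 * G.nE := by
      have hsplit : ∑ v ∈ Z, G.valency v + ∑ v ∈ P, G.valency v
          = ∑ v : Fin G.nV, G.valency v := by
        rw [hZ, hP]
        exact Finset.sum_filter_add_sum_filter_not Finset.univ
          (fun v => G.weight v = 0) (fun v => G.valency v)
      have htot := WG_sum_valency G
      have h1 : 3 * Z.card ≤ ∑ v ∈ Z, G.valency v := by
        calc 3 * Z.card = ∑ _v ∈ Z, 3 := by rw [Finset.sum_const]; ring
        _ ≤ _ := Finset.sum_le_sum fun v hv => by
            rw [hZ, Finset.mem_filter] at hv; exact hval3 v hv.2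
      have h2' : P.card ≤ ∑ v ∈ P, G.valency v := by
        calc P.card = ∑ _v ∈ P, 1 := by rw [Finset.card_eq_sum_ones]
        _ ≤ _ := Finset.sum_le_sum fun v _ => hval1 v
      omega
    refine ⟨by omega, by omega, fun v => ?_⟩
    have := hwle v; omega

def WGpack (g : ℕ) :
    (Σ n : Fin (2 * g + 1), Σ m : Fin (3 * g + 1),
      (Fin m → Fin n × Fin n) × (Fin n → Fin (3 * g + 1))) → WeightedGraph :=
  fun x => ⟨x.1, x.2.1, x.2.2.1, fun v => (x.2.2.2 v : ℕ)⟩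

set_option synthInstance.maxHeartbeats 1000000 in
set_option maxHeartbeats 1000000 in
/-- For each integer `g ≥ 2` there are only finitely many isomorphism
classes of connected vertex-weighted graphs of genus `g` in which every vertex of
valency 1 or 2 has positive weight: there is a finite list containing a representative
of every isomorphism class. -/
theorem finitely_many_combinatorial_types (g : ℕ) (hg : 2 ≤ g) :
    ∃ L : List WeightedGraph, ∀ G : WeightedGraph,
      G.Connected →
      (∀ v : Fin G.nV, 1 ≤ G.valency v → G.valency v ≤ 2 → 0 < G.weight v) →
      G.genus = (g : ℤ) →
      ∃ H ∈ L, Nonempty (WeightedGraph.Iso G H) := by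
  refine ⟨Finset.univ.toList.map (WGpack g), fun G hc hval hgen => ?_⟩
  obtain ⟨hV, hE, hw⟩ := WG_bounds g hg G hc hval hgen
  refine ⟨G, ?_, ⟨⟨Equiv.refl _, Equiv.refl _, fun e => Or.inl rfl, fun v => rfl⟩⟩⟩
  rw [List.mem_map]
  exact ⟨⟨⟨G.nV, by omega⟩, ⟨G.nE, by omega⟩, G.ends,
    fun v => ⟨G.weight v, by have := hw v; omega⟩⟩,
    by simp [Finset.mem_toList], rfl⟩
end

section
/- Let Γ be a compact connected metric graph with a tropical meromorphic function F, let r ∈ ℝ, and suppose the sublevel set Γ_{≤r} = {y : F(y) ≤ r} is a proper nonempty subgraph with boundary points x_1, …, x_n and incoming tangent directions v_{ij} at x_i pointing into Γ_{≤r}. Then Σ_{i,j} d_{v_{ij}} F(x_i) = Σ_{y ∈ Γ_{<r}} ord_y(F), where Γ_{<r} = {y : F(y) < r}. -/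
open Finset

private lemma ite_slope_identity (c : ℤ) (A B r : ℝ)
    (h1 : ¬(A < r ∧ r < B)) (h2 : ¬(B < r ∧ r < A)) :
    (if A = r ∧ B ≤ r then c else 0) + (if B = r ∧ A ≤ r then -c else 0)
      = (if A < r then -c else 0) + (if B < r then c else 0) := by
  rcases lt_trichotomy A r with hA | hA | hA <;>
    rcases lt_trichotomy B r with hB | hB | hB
  · have nA : A ≠ r := ne_of_lt hA
    have nB : B ≠ r := ne_of_lt hB
    simp [nA, nB, hA, hB]
  · subst hB
    simp [ne_of_lt hA, hA, le_of_lt hA, lt_irrefl]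
  · exact absurd ⟨hA, hB⟩ h1
  · subst hA
    simp [ne_of_lt hB, hB, le_of_lt hB, lt_irrefl]
  · subst hA; subst hB; simp [lt_irrefl]
  · subst hA
    simp [ne_of_gt hB, not_le.mpr hB, lt_irrefl, not_lt.mpr (le_of_lt hB)]
  · exact absurd ⟨hB, hA⟩ h2
  · subst hB
    simp [ne_of_gt hA, not_le.mpr hA, lt_irrefl, not_lt.mpr (le_of_lt hA)]
  · have nA : A ≠ r := ne_of_gt hA
    have nB : B ≠ r := ne_of_gt hB
    simp [nA, nB, not_lt.mpr (le_of_lt hA), not_lt.mpr (le_of_lt hB)]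

open scoped Classical in
/-- Let `Γ` be a compact connected metric graph (modelled, after
subdivision, by a finite connected loopless multigraph with positive edge lengths) with a
tropical meromorphic function `F` (affine with integer slope `s e` along each edge), and
let `r ∈ ℝ`.  Suppose the sublevel set `Γ_{≤r}` is a proper nonempty subgraph; after
subdividing we may assume no edge crosses the level `r` in its interior, so the boundary
points of `Γ_{≤r}` are the vertices `x` with `F x = r`, and the tangent directions at
such `x` pointing into `Γ_{≤r}` are the incident edges whose other endpoint has value
`≤ r`.  Then the sum over boundary points of the slopes `d_{v_{ij}} F(x_i)` into
`Γ_{≤r}` equals `Σ_{y ∈ Γ_{<r}} ord_y(F)`. -/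
theorem boundary_slope_identity {V E : Type*} [Fintype V] [Fintype E] [DecidableEq V]
    (ends : E → V × V) (hloopfree : ∀ e : E, (ends e).1 ≠ (ends e).2)
    (len : E → ℝ) (hlen : ∀ e, 0 < len e)
    (hconn : GraphConnected ends)
    (F : V → ℝ) (s : E → ℤ)
    (hslope : ∀ e : E, F (ends e).2 - F (ends e).1 = (s e : ℝ) * len e)
    (r : ℝ)
    (hnocross : ∀ e : E, ¬(F (ends e).1 < r ∧ r < F (ends e).2) ∧
                        ¬(F (ends e).2 < r ∧ r < F (ends e).1))
    (hnonempty : ∃ v : V, F v ≤ r) (hproper : ∃ v : V, r < F v) :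
    (∑ v : V, if F v = r then
        (∑ e : E, ((if (ends e).1 = v ∧ F (ends e).2 ≤ r then s e else 0) +
                   (if (ends e).2 = v ∧ F (ends e).1 ≤ r then -(s e) else 0)))
      else 0) =
    ∑ v : V, (if F v < r then ordAt ends s v else 0) := by
  simp only [ordAt]
  have push : ∀ (P : Prop) [Decidable P] (h : E → ℤ),
      (if P then ∑ e, h e else 0) = ∑ e, (if P then h e else 0) := by
    intro P _ h; split <;> simp
  rw [Finset.sum_congr rfl (fun v _ => push (F v = r) _),
      Finset.sum_congr rfl (fun v _ => push (F v < r) _),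
      ]
  conv_lhs => rw [Finset.sum_comm]
  conv_rhs => rw [Finset.sum_comm]
  refine Finset.sum_congr rfl (fun e _ => ?_)
  set a := (ends e).1 with ha
  set b := (ends e).2 with hb
  have hL : (∑ v : V, if F v = r then
      ((if a = v ∧ F b ≤ r then s e else 0) + (if b = v ∧ F a ≤ r then -(s e) else 0))
      else 0)
      = (if F a = r ∧ F b ≤ r then s e else 0) + (if F b = r ∧ F a ≤ r then -(s e) else 0) := by
    have h1 : ∀ v : V, (if F v = r then
        ((if a = v ∧ F b ≤ r then s e else 0) + (if b = v ∧ F a ≤ r then -(s e) else 0)) else 0)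
        = (if a = v then (if F v = r ∧ F b ≤ r then s e else 0) else 0)
          + (if b = v then (if F v = r ∧ F a ≤ r then -(s e) else 0) else 0) := by
      intro v; by_cases hv : F v = r <;> simp [hv, ite_and]
    rw [Finset.sum_congr rfl (fun v _ => h1 v), Finset.sum_add_distrib,
        Finset.sum_ite_eq, Finset.sum_ite_eq]
    simp
  have hR : (∑ v : V, if F v < r then
      ((if a = v then -(s e) else 0) + (if b = v then s e else 0)) else 0)
      = (if F a < r then -(s e) else 0) + (if F b < r then s e else 0) := by
    have h1 : ∀ v : V, (if F v < r then
        ((if a = v then -(s e) else 0) + (if b = v then s e else 0)) else 0)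
        = (if a = v then (if F v < r then -(s e) else 0) else 0)
          + (if b = v then (if F v < r then s e else 0) else 0) := by
      intro v; by_cases hv : F v < r <;> simp [hv]
    rw [Finset.sum_congr rfl (fun v _ => h1 v), Finset.sum_add_distrib,
        Finset.sum_ite_eq, Finset.sum_ite_eq]
    simp
  rw [hL, hR]
  have hc := hnocross e
  rw [← ha, ← hb] at hc
  exact ite_slope_identity (s e) (F a) (F b) r hc.1 hc.2
end
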